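/- arXiv:1908.07106 — 2 statements merged into one kernel-verified Lean document; each statement's English description precedes it below -/
import Mathlib

section
/- Let f(ε) = (1+ε)·log(1+ε) − ε for ε > −1. For every real t > 0 and every ε > 0, e^{−t} · Σ_{k ∈ ℕ, k ≥ (1+ε)t} t^k/k! ≤ exp(−f(ε)·t). -/
/-! Chernoff's method: on `{k ≥ a}` the weight `t^k/k!` grows by `e^{θ(k-a)} ≥ 1`, and the enlarged
weights `e^{-θa} (e^θ t)^k/k!` sum to `e^{-θa} exp(e^θ t)`. The choice `e^θ = 1 + ε`,
`a = (1+ε)t` turns `e^{-t} e^{-θa} exp(e^θ t)` into `exp(-f(ε) t)`. -/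

/-- `f(ε) = (1+ε)·log(1+ε) − ε`. -/
noncomputable def chernoffRate (ε : ℝ) : ℝ := (1 + ε) * Real.log (1 + ε) - ε

open Real

lemma Real.hasSum_pow_div_factorial (x : ℝ) : HasSum (fun k : ℕ => x ^ k / k.factorial) (exp x) := by
  rw [exp_eq_exp_ℝ]
  exact NormedSpace.expSeries_div_hasSum_exp x

lemma ite_le_pow_div_factorial_mul_exp {t : ℝ} (ht : 0 ≤ t) {θ : ℝ} (hθ : 0 ≤ θ) (a : ℝ) (k : ℕ) :
    (if a ≤ k then t ^ k / k.factorial else 0)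
      ≤ exp (-(θ * a)) * ((exp θ * t) ^ k / k.factorial) := by
  split_ifs with hk
  · have hgrowth : 1 ≤ exp (-(θ * a)) * exp θ ^ k := by
      rw [← exp_nat_mul, ← exp_add]
      exact one_le_exp (by nlinarith)
    calc t ^ k / k.factorial ≤ (exp (-(θ * a)) * exp θ ^ k) * (t ^ k / k.factorial) :=
          le_mul_of_one_le_left (by positivity) hgrowth
      _ = exp (-(θ * a)) * ((exp θ * t) ^ k / k.factorial) := by ring
  · positivity

lemma tsum_ite_pow_div_factorial_le {t : ℝ} (ht : 0 ≤ t) {θ : ℝ} (hθ : 0 ≤ θ) (a : ℝ) :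
    ∑' k : ℕ, (if a ≤ k then t ^ k / k.factorial else 0) ≤ exp (-(θ * a)) * exp (exp θ * t) := by
  have hbound := ite_le_pow_div_factorial_mul_exp ht hθ a
  have hmajorant := (Real.hasSum_pow_div_factorial (exp θ * t)).mul_left (exp (-(θ * a)))
  have hsummable : Summable fun k : ℕ => if a ≤ k then t ^ k / k.factorial else 0 :=
    hmajorant.summable.of_nonneg_of_le (fun k => by split_ifs <;> positivity) hbound
  exact hasSum_le hbound hsummable.hasSum hmajorant

/-- Upper-tail concentration of the Poisson weights: for `t > 0` and `ε > 0`,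
`e^{−t} Σ_{k ≥ (1+ε)t} t^k/k! ≤ exp(−f(ε) t)`. -/
theorem heat_kernel_upper_tail (t : ℝ) (ht : 0 < t) (ε : ℝ) (hε : 0 < ε) :
    Real.exp (-t) * (∑' k : ℕ, if (1 + ε) * t ≤ (k : ℝ) then t ^ k / (Nat.factorial k : ℝ) else 0)
      ≤ Real.exp (-(chernoffRate ε * t)) := by
  have hθ : 0 ≤ log (1 + ε) := log_nonneg (by linarith)
  have hexpθ : exp (log (1 + ε)) = 1 + ε := exp_log (by linarith)
  calc exp (-t) * (∑' k : ℕ, if (1 + ε) * t ≤ (k : ℝ) then t ^ k / (k.factorial : ℝ) else 0)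
      ≤ exp (-t) * (exp (-(log (1 + ε) * ((1 + ε) * t))) * exp ((1 + ε) * t)) := by
        gcongr
        simpa only [hexpθ] using tsum_ite_pow_div_factorial_le ht.le hθ ((1 + ε) * t)
    _ = exp (-(chernoffRate ε * t)) := by
        rw [← exp_add, ← exp_add, chernoffRate]
        ring_nf
end

section
/- Let X₁, X₂, …, Xₙ be i.i.d. nonnegative real random variables on a probability space, with variance σ² > 0, satisfying the tail bound P(X₁ > Z) ≤ K·e^{−cZ} for all Z > 0, where K ≥ 1 and c > 0 are constants. Let X = X₁ + ⋯ + Xₙ and let c₁ = √(cσ)/2. Then there is a constant C > 0, depending only on K, c and σ, such that for every real λ > 1, P( |X − E[X]| ≥ λσ√n ) ≤ C·( e^{−λ²/16} + n·e^{−c₁·λ^{1/2}·n^{1/4}} ). -/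
open MeasureTheory ProbabilityTheory Real Set

set_option maxHeartbeats 1000000

lemma exp_le_one_add_add_sq' {x : ℝ} (hx : x ≤ 1) : Real.exp x ≤ 1 + x + x ^ 2 := by
  rcases le_or_gt x (-1) with h | h
  · have h2 : Real.exp x ≤ 1/2 := by
      have h1 : Real.exp x ≤ Real.exp (-1) := Real.exp_le_exp.mpr h
      have h3 : (2:ℝ) ≤ Real.exp 1 := by have := Real.add_one_le_exp (1:ℝ); linarith
      have h4 : Real.exp (-1) = (Real.exp 1)⁻¹ := Real.exp_neg 1
      have h5 : (Real.exp 1)⁻¹ ≤ 1/2 := by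
        rw [inv_le_comm₀ (Real.exp_pos 1) (by norm_num)]; simpa using h3
      linarith
    nlinarith [sq_nonneg (x + 1/2)]
  · have habs : |x| ≤ 1 := abs_le.mpr ⟨by linarith, hx⟩
    have hb := Real.exp_bound habs (n := 2) (by norm_num)
    have hsum : ∑ m ∈ Finset.range 2, x ^ m / m.factorial = 1 + x := by
      simp [Finset.sum_range_succ]
    rw [hsum] at hb
    have h2 : Real.exp x - (1 + x) ≤ |x|^2 * ((2+1) / (2*2)) := by
      have := (abs_le.mp hb).2
      calc Real.exp x - (1 + x) ≤ |x| ^ 2 * (Nat.succ 2 / (Nat.factorial 2 * 2)) := this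
        _ = |x|^2 * ((2+1)/(2*2)) := by norm_num [Nat.factorial]
    have h3 := sq_abs x
    nlinarith [sq_nonneg x]


lemma abs_min_sub_min_le' {a b M : ℝ} : |min a M - min b M| ≤ |a - b| := by
  rcases le_total a M with h1 | h1 <;> rcases le_total b M with h2 | h2 <;>
    rw [abs_le] <;>
    simp only [min_eq_left, min_eq_right, h1, h2] <;>
    constructor <;> linarith [le_abs_self (a-b), neg_abs_le (a-b)]

lemma tail_exp_integrable' {Ω : Type} [MeasurableSpace Ω] {μ : Measure Ω}
    [IsProbabilityMeasure μ] {K c : ℝ} (hK : 1 ≤ K) (hc : 0 < c)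
    {f : Ω → ℝ} (hf : Measurable f) (hf0 : ∀ ω, 0 ≤ f ω)
    (htail : ∀ Z : ℝ, 0 < Z → μ {ω | Z < f ω} ≤ ENNReal.ofReal (K * Real.exp (-c * Z))) :
    Integrable (fun ω => Real.exp (c / 2 * f ω)) μ ∧
      ∫ ω, Real.exp (c / 2 * f ω) ∂μ ≤ 2 + K := by
  have hK0 : (0:ℝ) ≤ K := by linarith
  set W : Ω → ℝ := fun ω => Real.exp (c / 2 * f ω) - 1 with hWdef
  have hW0 : ∀ ω, 0 ≤ W ω := fun ω => by
    have : (1:ℝ) ≤ Real.exp (c / 2 * f ω) :=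
      Real.one_le_exp (mul_nonneg (by positivity) (hf0 ω))
    simp only [hWdef]; linarith
  have hWm : Measurable W := ((hf.const_mul _).exp.sub measurable_const)
  have hWtail : ∀ t : ℝ, 0 < t →
      μ {ω | t < W ω} ≤ ENNReal.ofReal (K * (1 + t) ^ (-(2:ℝ))) := by
    intro t ht
    have h1t : (0:ℝ) < 1 + t := by linarith
    set Z : ℝ := 2 / c * Real.log (1 + t) with hZdef
    have hZ : 0 < Z := mul_pos (by positivity) (Real.log_pos (by linarith))
    have hset : {ω | t < W ω} = {ω | Z < f ω} := by
      ext ω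
      simp only [Set.mem_setOf_eq, hWdef]
      rw [show (t < Real.exp (c / 2 * f ω) - 1) ↔ (1 + t < Real.exp (c / 2 * f ω)) by
        constructor <;> intro <;> linarith]
      rw [← Real.log_lt_iff_lt_exp h1t]
      rw [hZdef]
      constructor
      · intro h
        have h2 : 2 / c * Real.log (1 + t) < 2 / c * (c / 2 * f ω) :=
          mul_lt_mul_of_pos_left h (by positivity)
        rwa [show 2 / c * (c / 2 * f ω) = f ω by field_simp] at h2
      · intro h
        have h2 : c / 2 * (2 / c * Real.log (1 + t)) < c / 2 * f ω :=
          mul_lt_mul_of_pos_left h (by positivity)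
        rwa [show c / 2 * (2 / c * Real.log (1 + t)) = Real.log (1 + t) by field_simp] at h2
    rw [hset]
    refine (htail Z hZ).trans (le_of_eq ?_)
    congr 1
    have : -c * Z = Real.log (1 + t) * (-(2:ℝ)) := by
      rw [hZdef]; field_simp
    rw [this, Real.rpow_def_of_pos h1t]
  -- layer cake
  have hkey : ∫⁻ ω, ENNReal.ofReal (W ω) ∂μ = ∫⁻ t in Ioi (0:ℝ), μ {ω | t < W ω} :=
    lintegral_eq_lintegral_meas_lt μ (ae_of_all _ hW0) hWm.aemeasurable
  have hsplit : ∫⁻ t in Ioi (0:ℝ), μ {ω | t < W ω} ≤ 1 + ENNReal.ofReal K := by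
    rw [← Ioc_union_Ioi_eq_Ioi (zero_le_one (α := ℝ)),
      lintegral_union measurableSet_Ioi (Ioc_disjoint_Ioi le_rfl)]
    gcongr
    · calc ∫⁻ t in Ioc (0:ℝ) 1, μ {ω | t < W ω} ≤ ∫⁻ _ in Ioc (0:ℝ) 1, 1 :=
          lintegral_mono fun t => prob_le_one
      _ = 1 := by simp [Real.volume_Ioc]
    · calc ∫⁻ t in Ioi (1:ℝ), μ {ω | t < W ω}
          ≤ ∫⁻ t in Ioi (1:ℝ), ENNReal.ofReal (K * t ^ (-(2:ℝ))) := by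
            refine setLIntegral_mono (by measurability) fun t ht => ?_
            have ht1 : (1:ℝ) < t := ht
            refine (hWtail t (by linarith)).trans ?_
            apply ENNReal.ofReal_le_ofReal
            have : (1 + t) ^ (-(2:ℝ)) ≤ t ^ (-(2:ℝ)) :=
              Real.rpow_le_rpow_of_nonpos (by linarith) (by linarith) (by norm_num)
            nlinarith [Real.rpow_nonneg (by linarith : (0:ℝ) ≤ 1 + t) (-(2:ℝ))]
      _ = ENNReal.ofReal (∫ t in Ioi (1:ℝ), K * t ^ (-(2:ℝ))) := by
            rw [ofReal_integral_eq_lintegral_ofReal]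
            · exact (integrableOn_Ioi_rpow_of_lt (by norm_num) one_pos).const_mul K
            · filter_upwards [ae_restrict_mem measurableSet_Ioi] with t ht
              have : (0:ℝ) < t := lt_trans one_pos ht
              positivity
      _ = ENNReal.ofReal K := by
            rw [integral_const_mul, integral_Ioi_rpow_of_lt (by norm_num) one_pos]
            norm_num
  have hfin : ∫⁻ ω, ENNReal.ofReal (W ω) ∂μ ≤ ENNReal.ofReal (1 + K) := by
    rw [hkey]
    refine hsplit.trans (le_of_eq ?_)
    rw [ENNReal.ofReal_add zero_le_one hK0, ENNReal.ofReal_one]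
  have intW : Integrable W μ := by
    refine ⟨hWm.aestronglyMeasurable, ?_⟩
    rw [hasFiniteIntegral_iff_ofReal (ae_of_all _ hW0)]
    exact lt_of_le_of_lt hfin ENNReal.ofReal_lt_top
  have hWint : ∫ ω, W ω ∂μ ≤ 1 + K := by
    have := ofReal_integral_eq_lintegral_ofReal intW (ae_of_all _ hW0)
    rw [← ENNReal.ofReal_le_ofReal_iff (by linarith), this]
    exact hfin
  have hWnn : 0 ≤ ∫ ω, W ω ∂μ := integral_nonneg hW0
  constructor
  · have := intW.add (integrable_const (1:ℝ))
    refine this.congr (ae_of_all _ fun ω => ?_)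
    simp [hWdef]
  · have : (fun ω => Real.exp (c / 2 * f ω)) = fun ω => W ω + 1 := by
      funext ω; simp [hWdef]
    rw [this, integral_add intW (integrable_const 1), integral_const]
    simp only [measure_univ, probReal_univ, smul_eq_mul, one_mul]
    linarith

lemma chernoff_bounded' {Ω : Type} [MeasurableSpace Ω] {μ : Measure Ω}
    [IsProbabilityMeasure μ] {n : ℕ} {W : Fin n → Ω → ℝ} {M v t s : ℝ}
    (hind : iIndepFun W μ) (hmeas : ∀ i, Measurable (W i))
    (hM : 0 < M) (hbd : ∀ i ω, |W i ω| ≤ M)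
    (hmean : ∀ i, ∫ ω, W i ω ∂μ = 0) (hvar : ∀ i, ∫ ω, (W i ω) ^ 2 ∂μ ≤ v)
    (hv : 0 ≤ v) (ht : 0 ≤ t) (htM : t * M ≤ 1) :
    (μ {ω | s ≤ ∑ i, W i ω}).toReal ≤ Real.exp (-t * s + n * t ^ 2 * v) := by
  have hbd' : ∀ i ω, t * W i ω ≤ 1 := fun i ω =>
    le_trans (mul_le_mul_of_nonneg_left (le_trans (le_abs_self _) (hbd i ω)) ht) htM
  have hintW : ∀ i, Integrable (W i) μ := fun i =>
    Integrable.mono' (integrable_const M) (hmeas i).aestronglyMeasurable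
      (ae_of_all _ fun ω => hbd i ω)
  have hintW2 : ∀ i, Integrable (fun ω => (W i ω) ^ 2) μ := fun i =>
    Integrable.mono' (integrable_const (M ^ 2)) ((hmeas i).pow_const 2).aestronglyMeasurable
      (ae_of_all _ fun ω => by
        rw [Real.norm_eq_abs, abs_pow]
        exact pow_le_pow_left₀ (abs_nonneg _) (hbd i ω) 2)
  have hintexp : ∀ i, Integrable (fun ω => Real.exp (t * W i ω)) μ := fun i =>
    Integrable.mono' (integrable_const (Real.exp (t * M))) ((hmeas i).const_mul t).exp.aestronglyMeasurable
      (ae_of_all _ fun ω => by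
        rw [Real.norm_eq_abs, abs_of_pos (Real.exp_pos _), Real.exp_le_exp]
        exact mul_le_mul_of_nonneg_left (le_trans (le_abs_self _) (hbd i ω)) ht)
  have hmgf : ∀ i, mgf (W i) μ t ≤ Real.exp (t ^ 2 * v) := by
    intro i
    have step1 : mgf (W i) μ t ≤ ∫ ω, (1 + t * W i ω + t ^ 2 * (W i ω) ^ 2) ∂μ := by
      refine integral_mono (hintexp i) ?_ fun ω => ?_
      · exact (integrable_const 1).add ((hintW i).const_mul t) |>.add ((hintW2 i).const_mul (t^2))
      · have := exp_le_one_add_add_sq' (hbd' i ω)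
        calc Real.exp (t * W i ω) ≤ 1 + t * W i ω + (t * W i ω) ^ 2 := this
          _ = 1 + t * W i ω + t ^ 2 * (W i ω) ^ 2 := by ring
    have h12 : Integrable (fun ω => 1 + t * W i ω) μ :=
      (integrable_const 1).add ((hintW i).const_mul t)
    have step2 : ∫ ω, (1 + t * W i ω + t ^ 2 * (W i ω) ^ 2) ∂μ = 1 + t ^ 2 * ∫ ω, (W i ω) ^ 2 ∂μ := by
      rw [integral_add h12 ((hintW2 i).const_mul (t^2)),
        integral_add (integrable_const 1) ((hintW i).const_mul t),
        integral_const, integral_const_mul, integral_const_mul, hmean i]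
      simp
    have step3 : 1 + t ^ 2 * ∫ ω, (W i ω) ^ 2 ∂μ ≤ 1 + t ^ 2 * v := by
      have := hvar i
      nlinarith [sq_nonneg t]
    calc mgf (W i) μ t ≤ 1 + t ^ 2 * v := by
          rw [step2] at step1; linarith
      _ ≤ Real.exp (t ^ 2 * v) := by linarith [Real.add_one_le_exp (t ^ 2 * v)]
  have hsumfn : (∑ i : Fin n, W i) = fun ω => ∑ i, W i ω := by
    funext ω; simp
  have hsum_meas : Measurable (∑ i : Fin n, W i) := by
    rw [hsumfn]; exact Finset.univ.measurable_sum (fun i _ => hmeas i)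
  have hsumbd : ∀ ω, (∑ i : Fin n, W i) ω ≤ n * M := by
    intro ω
    rw [hsumfn]
    calc ∑ i, W i ω ≤ ∑ _i : Fin n, M :=
          Finset.sum_le_sum fun i _ => le_trans (le_abs_self _) (hbd i ω)
      _ = n * M := by simp [mul_comm]
  have hintexpS : Integrable (fun ω => Real.exp (t * (∑ i, W i) ω)) μ :=
    Integrable.mono' (integrable_const (Real.exp (t * (n * M))))
      ((hsum_meas.const_mul t).exp).aestronglyMeasurable
      (ae_of_all _ fun ω => by
        rw [Real.norm_eq_abs, abs_of_pos (Real.exp_pos _), Real.exp_le_exp]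
        exact mul_le_mul_of_nonneg_left (hsumbd ω) ht)
  have hset : {ω | s ≤ ∑ i, W i ω} = {ω | s ≤ (∑ i, W i) ω} := by
    rw [hsumfn]
  have hchern := measure_ge_le_exp_mul_mgf (μ := μ) (X := ∑ i, W i) s ht hintexpS
  rw [hset]
  refine hchern.trans ?_
  have hprod : mgf (∑ i, W i) μ t ≤ Real.exp (n * t ^ 2 * v) := by
    rw [hind.mgf_sum hmeas]
    calc ∏ i : Fin n, mgf (W i) μ t ≤ ∏ _i : Fin n, Real.exp (t ^ 2 * v) :=
          Finset.prod_le_prod (fun i _ => mgf_nonneg) (fun i _ => hmgf i)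
      _ = Real.exp (t ^ 2 * v) ^ n := by simp
      _ = Real.exp (n * (t ^ 2 * v)) := by rw [← Real.exp_nat_mul]
      _ = Real.exp (n * t ^ 2 * v) := by ring_nf
  calc Real.exp (-t * s) * mgf (∑ i, W i) μ t
      ≤ Real.exp (-t * s) * Real.exp (n * t ^ 2 * v) := by
        exact mul_le_mul_of_nonneg_left hprod (le_of_lt (Real.exp_pos _))
    _ = Real.exp (-t * s + n * t ^ 2 * v) := (Real.exp_add _ _).symm

/-- A Chernoff-type inequality for sums of i.i.d. nonnegative random variables with
exponentially decaying tails: if `X₁,…,Xₙ` are i.i.d., nonnegative, with variance `σ² > 0`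
and tail bound `P(X₁ > Z) ≤ K e^{−cZ}` for all `Z > 0`, then with `c₁ = √(cσ)/2` there is a
constant `C` depending only on `K`, `c` and `σ` such that for all `λ > 1`,
`P(|X − E[X]| ≥ λσ√n) ≤ C(e^{−λ²/16} + n e^{−c₁ λ^{1/2} n^{1/4}})`. -/
theorem chernoff_exponential_tails
    (K c σ : ℝ) (hK : 1 ≤ K) (hc : 0 < c) (hσ : 0 < σ) :
    ∃ C : ℝ, 0 < C ∧
      ∀ (Ω : Type) (_ : MeasurableSpace Ω) (μ : Measure Ω), IsProbabilityMeasure μ →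
      ∀ (n : ℕ) (hn : 1 ≤ n), ∀ (X : Fin n → Ω → ℝ),
        (∀ i, Measurable (X i)) →
        iIndepFun X μ →
        (∀ i j, IdentDistrib (X i) (X j) μ μ) →
        (∀ i ω, 0 ≤ X i ω) →
        (∀ i, variance (X i) μ = σ ^ 2) →
        (∀ Z : ℝ, 0 < Z → μ {ω | Z < X ⟨0, hn⟩ ω} ≤ ENNReal.ofReal (K * Real.exp (-c * Z))) →
        ∀ lam : ℝ, 1 < lam →
          μ {ω | lam * σ * Real.sqrt n ≤
              |(∑ i, X i ω) - ∫ ω', (∑ i, X i ω') ∂μ|}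
            ≤ ENNReal.ofReal (C * (Real.exp (-lam ^ 2 / 16) +
                n * Real.exp (-(Real.sqrt (c * σ) / 2) * Real.sqrt lam *
                  (n : ℝ) ^ ((1 : ℝ) / 4)))) := by
  have hK0 : (0:ℝ) < K := lt_of_lt_of_le one_pos hK
  have hdiv_pos : 0 < 16 * (2 + K) ^ 2 / (c ^ 2 * σ ^ 2) :=
    div_pos (by nlinarith) (by positivity)
  refine ⟨K + 2 + 16 * (2 + K) ^ 2 / (c ^ 2 * σ ^ 2), by linarith, ?_⟩
  set C : ℝ := K + 2 + 16 * (2 + K) ^ 2 / (c ^ 2 * σ ^ 2) with hCdef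
  clear_value C
  have hCK2 : K + 2 ≤ C := by rw [hCdef]; linarith
  have hCbig : 16 * (2 + K) ^ 2 / (c ^ 2 * σ ^ 2) ≤ C := by rw [hCdef]; linarith
  intro Ω mΩ μ hprob n hn X hXm hXind hXid hX0 hXvar hXtail lam hlam
  haveI := hprob
  set i₀ : Fin n := ⟨0, hn⟩ with hi₀
  clear_value i₀
  have hn1 : (1:ℝ) ≤ (n:ℝ) := by exact_mod_cast hn
  have hn0 : (0:ℝ) < (n:ℝ) := by linarith
  have hsn : 0 < Real.sqrt n := Real.sqrt_pos.mpr hn0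
  have hsn2 : Real.sqrt n ^ 2 = (n:ℝ) := Real.sq_sqrt hn0.le
  have hlam0 : (0:ℝ) < lam := by linarith
  set M : ℝ := Real.sqrt (σ * lam * Real.sqrt n / c) / 2 with hMdef
  clear_value M
  have hMarg : 0 < σ * lam * Real.sqrt n / c := by positivity
  have hM : 0 < M := by rw [hMdef]; positivity
  set q : ℝ := Real.sqrt (c * σ) / 2 * Real.sqrt lam * (n:ℝ) ^ ((1:ℝ)/4) with hqdef
  have h14 : ((n:ℝ)) ^ ((1:ℝ)/4) = Real.sqrt (Real.sqrt (n:ℝ)) := by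
    rw [Real.sqrt_eq_rpow, Real.sqrt_eq_rpow, ← Real.rpow_mul hn0.le]
    norm_num
  clear_value q
  have hq0 : 0 ≤ q := by rw [hqdef]; positivity
  have hq : c * M = q := by
    have h1 : 0 ≤ c * M := by positivity
    have hsq : (c*M)^2 = q^2 := by
      rw [hMdef, hqdef, h14]
      rw [mul_pow, mul_pow, mul_pow, div_pow, div_pow,
        Real.sq_sqrt hMarg.le, Real.sq_sqrt (by positivity : (0:ℝ) ≤ c*σ),
        Real.sq_sqrt hlam0.le, Real.sq_sqrt (Real.sqrt_nonneg _)]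
      field_simp
    calc c*M = Real.sqrt ((c*M)^2) := (Real.sqrt_sq h1).symm
      _ = Real.sqrt (q^2) := by rw [hsq]
      _ = q := Real.sqrt_sq hq0
  set s' : ℝ := lam * σ * Real.sqrt n / 2 with hs'def
  clear_value s'
  have hs'pos : 0 < s' := by rw [hs'def]; positivity
  have hs'M : s' = 2 * c * M ^ 2 := by
    rw [hs'def, hMdef, div_pow, Real.sq_sqrt hMarg.le]
    field_simp
  -- single-variable facts
  obtain ⟨hintexpX, hexpXle⟩ := tail_exp_integrable' hK hc (hXm i₀) (hX0 i₀) hXtail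
  have hsqX : Integrable (fun ω => (X i₀ ω) ^ 2) μ := by
    refine Integrable.mono' (hintexpX.const_mul (16 / c^2))
      ((hXm i₀).pow_const 2).aestronglyMeasurable (ae_of_all _ fun ω => ?_)
    have hx := hX0 i₀ ω
    have h1 : 1 + c/4 * X i₀ ω ≤ Real.exp (c/4 * X i₀ ω) := by
      have := Real.add_one_le_exp (c/4 * X i₀ ω); linarith
    have h2 : Real.exp (c/2 * X i₀ ω) = Real.exp (c/4 * X i₀ ω) * Real.exp (c/4 * X i₀ ω) := by
      rw [← Real.exp_add]; ring_nf
    have h3 : (0:ℝ) ≤ 1 + c/4 * X i₀ ω := by positivity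
    have h4 : (1 + c/4 * X i₀ ω) * (1 + c/4 * X i₀ ω) ≤
        Real.exp (c/4 * X i₀ ω) * Real.exp (c/4 * X i₀ ω) :=
      mul_le_mul h1 h1 h3 (Real.exp_pos _).le
    have h5 : c^2 * (X i₀ ω)^2 ≤ 16 * ((1 + c/4 * X i₀ ω) * (1 + c/4 * X i₀ ω)) := by
      nlinarith only [mul_nonneg hc.le hx]
    have h6 : 16 * ((1 + c/4 * X i₀ ω) * (1 + c/4 * X i₀ ω)) ≤
        16 * (Real.exp (c/4 * X i₀ ω) * Real.exp (c/4 * X i₀ ω)) :=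
      mul_le_mul_of_nonneg_left h4 (by norm_num)
    rw [Real.norm_eq_abs, abs_of_nonneg (sq_nonneg _), h2, div_mul_eq_mul_div,
      le_div_iff₀ (by positivity : (0:ℝ) < c^2)]
    linarith only [h5, h6]
  have hL2 : MemLp (X i₀) 2 μ :=
    (memLp_two_iff_integrable_sq (hXm i₀).aestronglyMeasurable).mpr hsqX
  have hintX0 : Integrable (X i₀) μ := hL2.integrable one_le_two
  have hintX : ∀ i, Integrable (X i) μ := fun i => ((hXid i i₀).integrable_iff).mpr hintX0
  set m : ℝ := ∫ ω, X i₀ ω ∂μ with hmdef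
  clear_value m
  have hIntS : ∫ ω', ∑ i, X i ω' ∂μ = n * m := by
    rw [integral_finset_sum Finset.univ (fun i _ => hintX i)]
    rw [Finset.sum_congr rfl (fun i _ => (hXid i i₀).integral_eq), ← hmdef]
    simp [mul_comm]
  -- truncated variables
  set Y : Fin n → Ω → ℝ := fun i ω => min (X i ω) M with hYdef
  clear_value Y
  have hYm : ∀ i, Measurable (Y i) := fun i => by rw [hYdef]; exact (hXm i).min measurable_const
  have hY0 : ∀ i ω, 0 ≤ Y i ω := fun i ω => by rw [hYdef]; exact le_min (hX0 i ω) hM.le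
  have hYM : ∀ i ω, Y i ω ≤ M := fun i ω => by rw [hYdef]; exact min_le_right _ _
  have hintY : ∀ i, Integrable (Y i) μ := fun i =>
    Integrable.mono' (integrable_const M) (hYm i).aestronglyMeasurable
      (ae_of_all _ fun ω => by rw [Real.norm_eq_abs, abs_of_nonneg (hY0 i ω)]; exact hYM i ω)
  have hYid : ∀ i, IdentDistrib (Y i) (Y i₀) μ μ := fun i => by
    rw [hYdef]
    exact (hXid i i₀).comp (measurable_id.min measurable_const)
  set a : ℝ := ∫ ω, Y i₀ ω ∂μ with hadef
  clear_value a
  have ha0 : 0 ≤ a := by rw [hadef]; exact integral_nonneg (hY0 i₀)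
  have haM : a ≤ M := by
    rw [hadef]
    have := integral_mono (hintY i₀) (integrable_const M) (hYM i₀)
    simpa using this
  set Δ : ℝ := ∫ ω, max (X i₀ ω - M) 0 ∂μ with hΔdef
  clear_value Δ
  have hmaxm : Measurable (fun ω => max (X i₀ ω - M) 0) :=
    ((hXm i₀).sub_const M).max measurable_const
  have hintmax : Integrable (fun ω => max (X i₀ ω - M) 0) μ := by
    refine Integrable.mono' hintX0 hmaxm.aestronglyMeasurable (ae_of_all _ fun ω => ?_)
    rw [Real.norm_eq_abs, abs_of_nonneg (le_max_right _ _)]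
    have := hX0 i₀ ω
    rcases le_total (X i₀ ω) M with h | h
    · rw [max_eq_right (by linarith)]; exact this
    · rw [max_eq_left (by linarith)]; linarith
  have hma : m - a = Δ := by
    rw [hmdef, hadef, hΔdef, ← integral_sub hintX0 (hintY i₀)]
    refine integral_congr_ae (ae_of_all _ fun ω => ?_)
    simp only [hYdef]
    show X i₀ ω - min (X i₀ ω) M = max (X i₀ ω - M) 0
    rcases le_total (X i₀ ω) M with h | h
    · rw [min_eq_left h, max_eq_right (by linarith)]; ring
    · rw [min_eq_right h, max_eq_left (by linarith)]
  have hΔ0 : 0 ≤ Δ := by rw [hΔdef]; exact integral_nonneg (fun ω => le_max_right _ _)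
  have hΔle : Δ ≤ 2 / c * (2 + K) * Real.exp (-(c/2) * M) := by
    have hpt : ∀ ω, max (X i₀ ω - M) 0 ≤
        (2 / c * Real.exp (-(c/2) * M)) * Real.exp (c/2 * X i₀ ω) := by
      intro ω
      have hx := hX0 i₀ ω
      rcases le_total (X i₀ ω) M with h | h
      · rw [max_eq_right (by linarith)]; positivity
      · rw [max_eq_left (by linarith)]
        have h1 : c/2 * (X i₀ ω - M) ≤ Real.exp (c/2 * (X i₀ ω - M)) := by
          have := Real.add_one_le_exp (c/2 * (X i₀ ω - M)); linarith
        have h2 : Real.exp (c/2 * (X i₀ ω - M)) =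
            Real.exp (-(c/2) * M) * Real.exp (c/2 * X i₀ ω) := by
          rw [← Real.exp_add]; ring_nf
        rw [h2] at h1
        have h3 := mul_le_mul_of_nonneg_left h1 (by positivity : (0:ℝ) ≤ 2/c)
        rw [show 2/c * (c/2 * (X i₀ ω - M)) = X i₀ ω - M by field_simp] at h3
        rw [mul_assoc]
        exact h3
    calc Δ ≤ ∫ ω, (2 / c * Real.exp (-(c/2) * M)) * Real.exp (c/2 * X i₀ ω) ∂μ := by
          rw [hΔdef]
          exact integral_mono hintmax (hintexpX.const_mul _) hpt
      _ = (2 / c * Real.exp (-(c/2) * M)) * ∫ ω, Real.exp (c/2 * X i₀ ω) ∂μ :=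
          integral_const_mul _ _
      _ ≤ (2 / c * Real.exp (-(c/2) * M)) * (2 + K) := by
          refine mul_le_mul_of_nonneg_left hexpXle (by positivity)
      _ = 2 / c * (2 + K) * Real.exp (-(c/2) * M) := by ring
  -- rewrite statement exponent
  have hstmt_exp : -(Real.sqrt (c * σ) / 2) * Real.sqrt lam * (n : ℝ) ^ ((1 : ℝ) / 4) = -q := by
    rw [hqdef]; ring
  by_cases hcase : (n:ℝ) * Δ ≤ s'
  · -- main case
    -- centered truncated variables
    set Z : Fin n → Ω → ℝ := fun i ω => Y i ω - a with hZdef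
    set N : Fin n → Ω → ℝ := fun i ω => a - Y i ω with hNdef
    clear_value Z N
    have hZm : ∀ i, Measurable (Z i) := fun i => by
      rw [hZdef]; exact (hYm i).sub measurable_const
    have hNm : ∀ i, Measurable (N i) := fun i => by
      rw [hNdef]; exact measurable_const.sub (hYm i)
    have hZbd : ∀ i ω, |Z i ω| ≤ M := fun i ω => by
      rw [hZdef]
      exact abs_le.mpr ⟨by dsimp only; linarith only [hY0 i ω, haM],
        by dsimp only; linarith only [hYM i ω, ha0]⟩
    have hNbd : ∀ i ω, |N i ω| ≤ M := fun i ω => by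
      rw [hNdef]
      exact abs_le.mpr ⟨by dsimp only; linarith only [hYM i ω, ha0],
        by dsimp only; linarith only [hY0 i ω, haM]⟩
    have hYint_eq : ∀ i, ∫ ω, Y i ω ∂μ = a := fun i => by
      rw [(hYid i).integral_eq, ← hadef]
    have hZmean : ∀ i, ∫ ω, Z i ω ∂μ = 0 := fun i => by
      simp only [hZdef]
      rw [integral_sub (hintY i) (integrable_const a), integral_const, hYint_eq i]
      simp
    have hNmean : ∀ i, ∫ ω, N i ω ∂μ = 0 := fun i => by
      simp only [hNdef]
      rw [integral_sub (integrable_const a) (hintY i), integral_const, hYint_eq i]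
      simp
    -- integrability of squares around constants
    have hXm2 : Integrable (fun ω => (X i₀ ω - m)^2) μ := by
      have hfe : (fun ω => (X i₀ ω - m)^2) = fun ω => X i₀ ω^2 - (2*m)*X i₀ ω + m^2 := by
        funext ω; ring
      rw [hfe]
      exact (hsqX.sub (hintX0.const_mul (2*m))).add (integrable_const _)
    have hYsq_int : ∀ (r : ℝ), Integrable (fun ω => (Y i₀ ω - r)^2) μ := by
      intro r
      refine Integrable.mono' (integrable_const ((M + |r|)^2))
        (((hYm i₀).sub measurable_const).pow_const 2).aestronglyMeasurable
        (ae_of_all _ fun ω => ?_)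
      rw [Real.norm_eq_abs, abs_of_nonneg (sq_nonneg _)]
      have h1 : |Y i₀ ω - r| ≤ M + |r| := by
        have := abs_sub_abs_le_abs_sub (Y i₀ ω) r
        have h2 : |Y i₀ ω| ≤ M := by
          rw [abs_of_nonneg (hY0 i₀ ω)]; exact hYM i₀ ω
        calc |Y i₀ ω - r| ≤ |Y i₀ ω| + |r| := abs_sub _ _
          _ ≤ M + |r| := by linarith only [h2]
      calc (Y i₀ ω - r)^2 = |Y i₀ ω - r|^2 := (sq_abs _).symm
        _ ≤ (M + |r|)^2 := pow_le_pow_left₀ (abs_nonneg _) h1 2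
    -- variance of truncation is at most σ²
    have h3 : σ^2 = ∫ ω, (X i₀ ω - m)^2 ∂μ := by
      rw [← hXvar i₀, variance_eq_integral (hXm i₀).aemeasurable, hmdef]
    have hVle : ∫ ω, (Y i₀ ω - a)^2 ∂μ ≤ σ^2 := by
      have hlin_int : Integrable (fun ω => (a - min m M) * (2 * Y i₀ ω - a - min m M)) μ := by
        refine Integrable.const_mul ?_ _
        exact (((hintY i₀).const_mul 2).sub (integrable_const a)).sub (integrable_const (min m M))
      have hexpand : ∫ ω, (Y i₀ ω - min m M)^2 ∂μ
          = (∫ ω, (Y i₀ ω - a)^2 ∂μ) + (a - min m M)^2 := by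
        have hpt : (fun ω => (Y i₀ ω - min m M)^2)
            = fun ω => (Y i₀ ω - a)^2 + (a - min m M) * (2 * Y i₀ ω - a - min m M) := by
          funext ω; ring
        rw [hpt, integral_add (hYsq_int a) hlin_int, integral_const_mul]
        have hlin : ∫ ω, (2 * Y i₀ ω - a - min m M) ∂μ = 2*a - a - min m M := by
          have e : (fun ω => 2 * Y i₀ ω - a - min m M)
              = fun ω => 2 * Y i₀ ω - (a + min m M) := by
            funext ω; ring
          rw [e, integral_sub ((hintY i₀).const_mul 2) (integrable_const _),
            integral_const_mul, integral_const, hYint_eq i₀]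
          simp only [measure_univ, probReal_univ, smul_eq_mul, one_mul]
          ring
        rw [hlin]
        ring
      have h2 : ∫ ω, (Y i₀ ω - min m M)^2 ∂μ ≤ ∫ ω, (X i₀ ω - m)^2 ∂μ := by
        refine integral_mono (hYsq_int (min m M)) hXm2 fun ω => ?_
        have habs : |min (X i₀ ω) M - min m M| ≤ |X i₀ ω - m| := abs_min_sub_min_le'
        have hYe : Y i₀ ω = min (X i₀ ω) M := by rw [hYdef]
        rw [hYe]
        calc (min (X i₀ ω) M - min m M)^2 = |min (X i₀ ω) M - min m M|^2 := (sq_abs _).symm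
          _ ≤ |X i₀ ω - m|^2 := pow_le_pow_left₀ (abs_nonneg _) habs 2
          _ = (X i₀ ω - m)^2 := sq_abs _
      linarith only [hexpand, h2, h3, sq_nonneg (a - min m M)]
    have hZvar : ∀ i, ∫ ω, (Z i ω)^2 ∂μ ≤ σ^2 := by
      intro i
      have hu : Measurable (fun x : ℝ => (x - a)^2) :=
        (measurable_id.sub measurable_const).pow_const 2
      calc ∫ ω, (Z i ω)^2 ∂μ = ∫ ω, (Y i ω - a)^2 ∂μ := by rw [hZdef]
        _ = ∫ ω, (Y i₀ ω - a)^2 ∂μ := ((hYid i).comp hu).integral_eq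
        _ ≤ σ^2 := hVle
    have hNvar : ∀ i, ∫ ω, (N i ω)^2 ∂μ ≤ σ^2 := by
      intro i
      have hpt : (fun ω => (N i ω)^2) = fun ω => (Z i ω)^2 := by
        funext ω; rw [hZdef, hNdef]; dsimp only; ring
      rw [hpt]; exact hZvar i
    -- independence
    have hZind : iIndepFun Z μ := by
      rw [hZdef, hYdef]
      exact hXind.comp (fun _ x => min x M - a)
        (fun _ => (measurable_id.min measurable_const).sub measurable_const)
    have hNind : iIndepFun N μ := by
      rw [hNdef, hYdef]
      exact hXind.comp (fun _ x => a - min x M)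
        (fun _ => measurable_const.sub (measurable_id.min measurable_const))
    -- generic tail bound via Chernoff
    have hgen : ∀ (W : Fin n → Ω → ℝ), iIndepFun W μ →
        (∀ i, Measurable (W i)) → (∀ i ω, |W i ω| ≤ M) →
        (∀ i, ∫ ω, W i ω ∂μ = 0) → (∀ i, ∫ ω, (W i ω)^2 ∂μ ≤ σ^2) →
        (μ {ω | s' ≤ ∑ i, W i ω}).toReal
          ≤ Real.exp (-lam ^ 2 / 16) + n * Real.exp (-q) := by
      intro W hind hmeas hbd hmean hvar
      rcases le_total (lam / (4 * (σ * Real.sqrt n))) (1/M) with hcmp | hcmp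
      · -- small t regime
        have ht0 : 0 ≤ lam / (4 * (σ * Real.sqrt n)) := by positivity
        have htM : lam / (4 * (σ * Real.sqrt n)) * M ≤ 1 := by
          have := mul_le_mul_of_nonneg_right hcmp hM.le
          rwa [one_div, inv_mul_cancel₀ hM.ne'] at this
        have h := chernoff_bounded' hind hmeas hM hbd hmean hvar (sq_nonneg σ) ht0 htM (s := s')
        refine h.trans ?_
        have e1 : lam / (4 * (σ * Real.sqrt n)) * s' = lam^2/8 := by
          rw [hs'def]
          field_simp
          ring
        have e2 : (n:ℝ) * (lam / (4 * (σ * Real.sqrt n)))^2 * σ^2 = lam^2/16 := by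
          rw [div_pow, mul_pow, mul_pow, hsn2]
          field_simp
          ring
        have hexp_eq : -(lam / (4 * (σ * Real.sqrt n))) * s'
            + (n:ℝ) * (lam / (4 * (σ * Real.sqrt n)))^2 * σ^2 = -lam ^ 2 / 16 := by
          have : -(lam / (4 * (σ * Real.sqrt n))) * s' = -(lam / (4 * (σ * Real.sqrt n)) * s') := by
            ring
          rw [this, e1, e2]
          ring
        rw [hexp_eq]
        have hnn : 0 ≤ (n:ℝ) * Real.exp (-q) := by positivity
        linarith only [hnn]
      · -- boundary t = 1/M regime
        have ht0 : (0:ℝ) ≤ 1/M := by positivity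
        have htM : 1/M * M ≤ 1 := by
          rw [one_div, inv_mul_cancel₀ hM.ne']
        have h := chernoff_bounded' hind hmeas hM hbd hmean hvar (sq_nonneg σ) ht0 htM (s := s')
        refine h.trans ?_
        have h6 : 4 * (σ * Real.sqrt n) ≤ lam * M := by
          rw [div_le_div_iff₀ hM (by positivity)] at hcmp
          linarith only [hcmp]
        have hkey : (n:ℝ) * σ^2 ≤ s' * M / 2 := by
          rw [hs'def]
          have h6' := mul_le_mul_of_nonneg_right h6 (by positivity : (0:ℝ) ≤ σ * Real.sqrt n)
          rw [show 4 * (σ * Real.sqrt n) * (σ * Real.sqrt n)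
            = 4 * σ^2 * (Real.sqrt n ^ 2) by ring, hsn2] at h6'
          linarith only [h6']
        have hexp_le : -(1/M) * s' + (n:ℝ) * (1/M)^2 * σ^2 ≤ -q := by
          rw [← hq]
          have h7 : (n:ℝ) * (1/M)^2 * σ^2 ≤ s' / (2*M) := by
            have he : (n:ℝ) * (1/M)^2 * σ^2 = (n * σ^2)/M^2 := by
              field_simp
            rw [he, div_le_div_iff₀ (by positivity) (by positivity)]
            have h8 := mul_le_mul_of_nonneg_right hkey (by positivity : (0:ℝ) ≤ 2*M)
            linarith only [h8]
          have h9 : s' / (2*M) = c * M := by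
            rw [hs'M]; field_simp
          have h11 : (1/M) * s' = 2 * (c * M) := by
            rw [hs'M]; field_simp
          linarith only [h7, h9, h11]
        calc Real.exp (-(1/M) * s' + (n:ℝ) * (1/M)^2 * σ^2) ≤ Real.exp (-q) :=
              Real.exp_le_exp.mpr hexp_le
          _ ≤ Real.exp (-lam ^ 2 / 16) + (n:ℝ) * Real.exp (-q) := by
              have h12 := mul_le_mul_of_nonneg_right hn1 (Real.exp_pos (-q)).le
              have h13 := Real.exp_pos (-lam ^ 2 / 16)
              linarith only [h12, h13]
    -- event inclusion
    have hsub : {ω | lam * σ * Real.sqrt n ≤ |(∑ i, X i ω) - ∫ ω', (∑ i, X i ω') ∂μ|}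
        ⊆ (⋃ i, {ω | M < X i ω}) ∪ ({ω | s' ≤ ∑ i, Z i ω} ∪ {ω | s' ≤ ∑ i, N i ω}) := by
      intro ω hω
      simp only [Set.mem_setOf_eq] at hω
      rw [hIntS] at hω
      by_cases hA : ∀ i, X i ω ≤ M
      · right
        have hYX : ∀ i, Y i ω = X i ω := fun i => by
          rw [hYdef]; exact min_eq_left (hA i)
        have hsZ : ∑ i, Z i ω = (∑ i, X i ω) - n * a := by
          have hZe : ∀ i, Z i ω = X i ω - a := fun i => by
            rw [hZdef]; dsimp only; rw [hYX i]
          rw [Finset.sum_congr rfl fun i _ => hZe i, Finset.sum_sub_distrib,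
            Finset.sum_const, Finset.card_univ, Fintype.card_fin, nsmul_eq_mul]
        have hdiff : |(n:ℝ) * m - n * a| ≤ s' := by
          rw [show (n:ℝ)*m - n*a = n*(m-a) by ring, hma,
            abs_of_nonneg (mul_nonneg hn0.le hΔ0)]
          exact hcase
        have habs : s' ≤ |∑ i, Z i ω| := by
          rw [hsZ]
          have htri : |(∑ i, X i ω) - n*m| ≤ |(∑ i, X i ω) - n*a| + |(n:ℝ)*m - n*a| := by
            have h1 : (∑ i, X i ω) - n*m = ((∑ i, X i ω) - n*a) + (n*a - n*m) := by ring
            rw [h1]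
            refine (abs_add_le _ _).trans ?_
            rw [abs_sub_comm ((n:ℝ)*a) (n*m)]
          have h2s : 2*s' ≤ |(∑ i, X i ω) - (n:ℝ)*m| := by
            rw [show 2*s' = lam * σ * Real.sqrt n by rw [hs'def]; ring]
            exact hω
          linarith only [htri, hdiff, h2s]
        rcases le_or_gt 0 (∑ i, Z i ω) with hpos | hneg
        · left
          rw [abs_of_nonneg hpos] at habs
          exact habs
        · right
          have hNZ : ∑ i, N i ω = -∑ i, Z i ω := by
            have : ∀ i, N i ω = -(Z i ω) := fun i => by
              rw [hNdef, hZdef]; dsimp only; ring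
            rw [Finset.sum_congr rfl fun i _ => this i, Finset.sum_neg_distrib]
          show s' ≤ ∑ i, N i ω
          rw [hNZ]
          rw [abs_of_neg hneg] at habs
          exact habs
      · left
        push_neg at hA
        obtain ⟨i, hi⟩ := hA
        exact Set.mem_iUnion.mpr ⟨i, hi⟩
    -- assemble bounds
    have hr0 : (0:ℝ) ≤ Real.exp (-lam ^ 2 / 16) + n * Real.exp (-q) := by positivity
    have hBZ : μ {ω | s' ≤ ∑ i, Z i ω}
        ≤ ENNReal.ofReal (Real.exp (-lam ^ 2 / 16) + n * Real.exp (-q)) := by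
      rw [ENNReal.le_ofReal_iff_toReal_le (measure_ne_top μ _) hr0]
      exact hgen Z hZind hZm hZbd hZmean hZvar
    have hBN : μ {ω | s' ≤ ∑ i, N i ω}
        ≤ ENNReal.ofReal (Real.exp (-lam ^ 2 / 16) + n * Real.exp (-q)) := by
      rw [ENNReal.le_ofReal_iff_toReal_le (measure_ne_top μ _) hr0]
      exact hgen N hNind hNm hNbd hNmean hNvar
    have hAbd : μ (⋃ i, {ω | M < X i ω})
        ≤ ENNReal.ofReal ((n:ℝ) * (K * Real.exp (-c*M))) := by
      refine (measure_iUnion_le _).trans ?_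
      have heach : ∀ i : Fin n, μ {ω | M < X i ω} ≤ ENNReal.ofReal (K * Real.exp (-c*M)) := by
        intro i
        have hswap : μ {ω | M < X i ω} = μ {ω | M < X i₀ ω} :=
          (hXid i i₀).measure_mem_eq (measurableSet_Ioi (a := M))
        rw [hswap]
        exact hXtail M hM
      calc ∑' i : Fin n, μ {ω | M < X i ω}
          ≤ ∑' (j : Fin n), ENNReal.ofReal (K * Real.exp (-c*M)) := ENNReal.tsum_le_tsum heach
        _ = (n:ENNReal) * ENNReal.ofReal (K * Real.exp (-c*M)) := by
            rw [tsum_fintype]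
            simp [Finset.sum_const, Finset.card_univ, nsmul_eq_mul]
        _ = ENNReal.ofReal ((n:ℝ) * (K * Real.exp (-c*M))) := by
            rw [← ENNReal.ofReal_natCast n, ← ENNReal.ofReal_mul (Nat.cast_nonneg n)]
    have hKE0 : (0:ℝ) ≤ (n:ℝ) * (K * Real.exp (-c*M)) :=
      mul_nonneg (Nat.cast_nonneg n) (mul_nonneg hK0.le (Real.exp_pos _).le)
    refine (measure_mono hsub).trans ?_
    refine (measure_union_le _ _).trans ?_
    refine (add_le_add hAbd ((measure_union_le _ _).trans (add_le_add hBZ hBN))).trans ?_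
    rw [← ENNReal.ofReal_add hr0 hr0, ← ENNReal.ofReal_add hKE0 (by linarith)]
    apply ENNReal.ofReal_le_ofReal
    rw [hstmt_exp, ← hq]
    have hE0 : (0:ℝ) ≤ Real.exp (-(c*M)) := (Real.exp_pos _).le
    have he10 : (0:ℝ) ≤ Real.exp (-lam ^ 2 / 16) := (Real.exp_pos _).le
    have hnE0 : (0:ℝ) ≤ (n:ℝ) * Real.exp (-(c*M)) := mul_nonneg (Nat.cast_nonneg n) hE0
    have hc1 := mul_le_mul_of_nonneg_right hCK2 hnE0
    have hc2 := mul_le_mul_of_nonneg_right hCK2 he10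
    have hKexp : (n:ℝ) * (K * Real.exp (-c*M)) = K * ((n:ℝ) * Real.exp (-(c*M))) := by
      rw [show -(c*M) = -c*M by ring]; ring
    rw [hKexp]
    have hKe1 : (0:ℝ) ≤ K * Real.exp (-lam ^ 2 / 16) := mul_nonneg hK0.le he10
    linarith only [hc1, hc2, hKe1]
  · -- degenerate case: big truncation error forces RHS ≥ 1
    push_neg at hcase
    have h1 : s' < (n:ℝ) * (2 / c * (2 + K) * Real.exp (-(c/2) * M)) := by
      calc s' < (n:ℝ) * Δ := hcase
        _ ≤ _ := by
          refine mul_le_mul_of_nonneg_left hΔle (by positivity)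
    have hE : c * lam * σ / (4 * (2 + K) * Real.sqrt n) < Real.exp (-(c/2) * M) := by
      have hnn : Real.sqrt n * Real.sqrt n = (n:ℝ) := Real.mul_self_sqrt hn0.le
      set E := Real.exp (-(c/2) * M) with hEdef
      clear_value E
      have h2 : c * s' < c * ((n:ℝ) * (2 / c * (2 + K) * E)) := mul_lt_mul_of_pos_left h1 hc
      have h3 : c * ((n:ℝ) * (2 / c * (2 + K) * E)) = 2 * (n:ℝ) * (2 + K) * E := by
        field_simp
      have h4 : c * s' = c * lam * σ * Real.sqrt n / 2 := by rw [hs'def]; ring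
      rw [div_lt_iff₀ (by positivity), ← mul_lt_mul_iff_of_pos_right hsn]
      have h5 : E * (4 * (2 + K) * Real.sqrt n) * Real.sqrt n
          = 4 * (2 + K) * E * (n:ℝ) := by
        rw [show E * (4 * (2 + K) * Real.sqrt n) * Real.sqrt n
          = 4 * (2 + K) * E * (Real.sqrt n * Real.sqrt n) by ring, hnn]
      rw [h5]
      rw [h3, h4] at h2
      linarith only [h2]
    have hsq : c^2 * lam^2 * σ^2 / (16 * (2 + K)^2 * n) < Real.exp (-(c * M)) := by
      have h2 : Real.exp (-(c * M)) = Real.exp (-(c/2) * M) * Real.exp (-(c/2) * M) := by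
        rw [← Real.exp_add]; ring_nf
      have h3 : 0 < c * lam * σ / (4 * (2 + K) * Real.sqrt n) := by positivity
      rw [h2]
      have hden : (4 * (2 + K) * Real.sqrt n)^2 = 16 * (2 + K)^2 * (n:ℝ) := by
        rw [mul_pow, mul_pow, hsn2]; ring
      have hnum : (c * lam * σ)^2 = c^2 * lam^2 * σ^2 := by ring
      calc c^2 * lam^2 * σ^2 / (16 * (2 + K)^2 * n)
          = (c * lam * σ / (4 * (2 + K) * Real.sqrt n))^2 := by
            rw [div_pow, hden, hnum]
        _ < Real.exp (-(c/2) * M) * Real.exp (-(c/2) * M) := by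
            rw [sq]
            exact mul_lt_mul'' hE hE h3.le h3.le
    have hfinal : 1 ≤ C * (Real.exp (-lam ^ 2 / 16) + n * Real.exp (-q)) := by
      have h4 : c^2 * σ^2 / (16 * (2 + K)^2) ≤ (n:ℝ) * Real.exp (-(c * M)) := by
        have h5 : c^2 * σ^2 / (16 * (2 + K)^2) ≤ c^2 * lam^2 * σ^2 / (16 * (2 + K)^2 * n) * n := by
          rw [div_mul_eq_mul_div, div_le_div_iff₀ (by positivity) (by positivity)]
          have hl2 : 1 ≤ lam^2 := by nlinarith only [hlam]
          linarith only [mul_le_mul_of_nonneg_right hl2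
            (by positivity : (0:ℝ) ≤ c^2*σ^2*(16*(2+K)^2*(n:ℝ)))]
        calc c^2 * σ^2 / (16 * (2 + K)^2) ≤ c^2 * lam^2 * σ^2 / (16 * (2 + K)^2 * n) * n := h5
          _ ≤ (n:ℝ) * Real.exp (-(c * M)) := by
              rw [mul_comm]
              exact mul_le_mul_of_nonneg_left hsq.le hn0.le
      rw [← hq]
      have h6 : 0 ≤ Real.exp (-lam^2/16) := (Real.exp_pos _).le
      have h7 : 16 * (2 + K)^2 / (c^2 * σ^2) * (c^2 * σ^2 / (16 * (2 + K)^2)) = 1 := by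
        field_simp
      calc (1:ℝ) = 16 * (2 + K)^2 / (c^2 * σ^2) * (c^2 * σ^2 / (16 * (2 + K)^2)) := h7.symm
        _ ≤ C * ((n:ℝ) * Real.exp (-(c * M))) := by
            refine mul_le_mul hCbig h4 (by positivity) (by linarith [hCK2, hK0])
        _ ≤ C * (Real.exp (-lam ^ 2 / 16) + n * Real.exp (-(c * M))) := by
            have hC0 : 0 ≤ C := by linarith only [hCK2, hK0]
            have h8 : 0 ≤ C * Real.exp (-lam ^ 2 / 16) :=
              mul_nonneg hC0 (Real.exp_pos _).le
            linarith only [h8]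
    refine le_trans prob_le_one ?_
    rw [← ENNReal.ofReal_one]
    apply ENNReal.ofReal_le_ofReal
    rw [hstmt_exp]
    exact hfinal
end
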